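/- Let 𝔛 ⊂ ℂ be a discrete, closed (locally finite) set and f_1,…,f_N, g_1,…,g_N ∈ ℓ²(𝔛) with Σ_{j=1}^N f_j(x) g_j(x) = 0 for all x ∈ 𝔛. Suppose L is a bounded linear operator on ℓ²(𝔛) with matrix entries L(x,y) = (Σ_{j=1}^N f_j(x) g_j(y))/(x−y) for x ≠ y and L(x,x) = 0, that Lᵗ is a bounded linear operator with matrix entries Lᵗ(x,y) = L(y,x), and that I + L and I + Lᵗ are invertible. Set K = L(I+L)^{−1}, F_j = (I+L)^{−1} f_j and G_j = (I+Lᵗ)^{−1} g_j. Then for all x ≠ y in 𝔛 the matrix entry of K satisfies K(x,y) = (Σ_{j=1}^N F_j(x) G_j(y))/(x−y). -/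

import Mathlib

/-!
Let `D` be multiplication by the coordinate. The hypothesis on the entries of `L` says that
`[D, L] = ∑ j, f j ⊗ g j`, and for `M = (1 + L)⁻¹` the identity `M [D, L] M = M D - D M` gives
`(y - x) M(x, y) = ∑ j, (M f j)(x) (Mᵗ g j)(y)`; off the diagonal this is the claim, since
`K = 1 - M`.

As `D` is unbounded, it is replaced by multiplication by `φₙ ∘ coord`, where `φₙ` clamps real and
imaginary parts to `[-n, n]`. Since `φₙ` is bounded and 2-Lipschitz, the commutator kernel
`(φₙ z - φₙ w) L(z, w)` is dominated by `2 |∑ j, f j z * g j w|`, and dominated convergence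
(in `w`, then in `z`) lets `n → ∞`. The entries of `(1 + Lᵗ)⁻¹` are those of `M` transposed
because `Lᵗ` is `L†` conjugated by complex conjugation.
-/

noncomputable section

open scoped ENNReal

def entry {X : Type*} (A : lp (fun _ : X => ℂ) 2 →L[ℂ] lp (fun _ : X => ℂ) 2) (x y : X) : ℂ :=
  letI := Classical.decEq X
  inner (𝕜 := ℂ) (lp.single 2 x (1:ℂ)) (A (lp.single 2 y 1))

open scoped lp ComplexConjugate InnerProductSpace InnerProduct
open Filter Topology
open ContinuousLinearMap (adjoint_inner_left)

namespace IntegrableOperator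

variable {X : Type*}

section Entries

def basisVec (x : X) : ℓ²(X, ℂ) :=
  letI := Classical.decEq X
  lp.single 2 x 1

theorem inner_basisVec_left (x : X) (v : ℓ²(X, ℂ)) : ⟪basisVec x, v⟫_ℂ = v x := by
  classical
  simp [basisVec, lp.inner_single_left]

theorem basisVec_apply_self (x : X) : basisVec x x = 1 := by
  classical
  exact lp.single_apply_self _ _ _

theorem basisVec_apply_of_ne {x y : X} (h : y ≠ x) : basisVec x y = 0 := by
  classical
  exact lp.single_apply_ne _ _ _ h

theorem basisVec_apply_comm (x y : X) : basisVec x y = basisVec y x := by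
  rcases eq_or_ne y x with rfl | h
  · rfl
  · rw [basisVec_apply_of_ne h, basisVec_apply_of_ne h.symm]

theorem tsum_basisVec_mul (x : X) (v : X → ℂ) : ∑' w, basisVec x w * v w = v x := by
  rw [tsum_eq_single x fun w hw => by rw [basisVec_apply_of_ne hw, zero_mul],
    basisVec_apply_self, one_mul]

theorem tsum_mul_basisVec (x : X) (v : X → ℂ) : ∑' w, v w * basisVec x w = v x := by
  simpa only [mul_comm] using tsum_basisVec_mul x v

theorem entry_eq_apply (A : ℓ²(X, ℂ) →L[ℂ] ℓ²(X, ℂ)) (x y : X) :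
    entry A x y = A (basisVec y) x :=
  inner_basisVec_left x _

theorem entry_eq_conj_adjoint_apply (A : ℓ²(X, ℂ) →L[ℂ] ℓ²(X, ℂ)) (x y : X) :
    entry A x y = conj ((A†) (basisVec x) y) := by
  rw [← inner_basisVec_left y, inner_conj_symm, adjoint_inner_left]
  rfl

theorem entry_add (A B : ℓ²(X, ℂ) →L[ℂ] ℓ²(X, ℂ)) (x y : X) :
    entry (A + B) x y = entry A x y + entry B x y :=
  inner_add_right _ _ _

theorem entry_sub (A B : ℓ²(X, ℂ) →L[ℂ] ℓ²(X, ℂ)) (x y : X) :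
    entry (A - B) x y = entry A x y - entry B x y :=
  inner_sub_right _ _ _

theorem entry_one (x y : X) : entry 1 x y = basisVec y x :=
  entry_eq_apply 1 x y

theorem entry_one_of_ne {x y : X} (h : x ≠ y) : entry 1 x y = 0 := by
  rw [entry_one, basisVec_apply_of_ne h]

theorem hasSum_conj_mul (u v : ℓ²(X, ℂ)) :
    HasSum (fun w => conj (u w) * v w) ⟪u, v⟫_ℂ := by
  simpa only [RCLike.inner_apply, mul_comm] using lp.hasSum_inner (𝕜 := ℂ) u v

theorem hasSum_mul (u v : ℓ²(X, ℂ)) : HasSum (fun w => u w * v w) ⟪star u, v⟫_ℂ := by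
  simpa only [lp.star_apply, RCLike.star_def, Complex.conj_conj] using
    hasSum_conj_mul (star u) v

theorem summable_norm_mul (u v : ℓ²(X, ℂ)) : Summable fun w => ‖u w‖ * ‖v w‖ := by
  simpa only [norm_mul] using (hasSum_mul u v).summable.norm

theorem hasSum_entry_mul (A : ℓ²(X, ℂ) →L[ℂ] ℓ²(X, ℂ)) (v : ℓ²(X, ℂ)) (x : X) :
    HasSum (fun w => entry A x w * v w) (A v x) := by
  rw [← inner_basisVec_left x, ← adjoint_inner_left]
  simpa only [← entry_eq_conj_adjoint_apply] using
    hasSum_conj_mul ((A†) (basisVec x)) v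

theorem entry_mul (A B : ℓ²(X, ℂ) →L[ℂ] ℓ²(X, ℂ)) (x y : X) :
    entry (A * B) x y = ∑' z, entry A x z * entry B z y := by
  simp only [entry_eq_apply B, entry_eq_apply (A * B)]
  exact (hasSum_entry_mul A (B (basisVec y)) x).tsum_eq.symm

theorem entry_mul_mul (A B C : ℓ²(X, ℂ) →L[ℂ] ℓ²(X, ℂ)) (x y : X) :
    entry (A * B * C) x y = ∑' z, entry A x z * ∑' w, entry B z w * entry C w y := by
  simp only [mul_assoc, entry_mul]

end Entries

section Transpose

def IsTranspose (A B : ℓ²(X, ℂ) →L[ℂ] ℓ²(X, ℂ)) : Prop :=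
  ∀ x y, entry B x y = entry A y x

variable {A B : ℓ²(X, ℂ) →L[ℂ] ℓ²(X, ℂ)}

theorem IsTranspose.apply_eq_tsum (h : IsTranspose A B) (v : ℓ²(X, ℂ)) (x : X) :
    B v x = ∑' w, entry A w x * v w := by
  simp only [← h x]
  exact (hasSum_entry_mul B v x).tsum_eq.symm

theorem IsTranspose.apply_eq_conj_adjoint (h : IsTranspose A B) (v : ℓ²(X, ℂ)) (x : X) :
    B v x = conj ((A†) (star v) x) := by
  rw [h.apply_eq_tsum, ← inner_basisVec_left x ((A†) _),
    inner_conj_symm, adjoint_inner_left, ← (hasSum_mul v _).tsum_eq]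
  simp only [entry_eq_apply A, mul_comm]

theorem IsTranspose.tsum_mul_apply (h : IsTranspose A B) (u v : ℓ²(X, ℂ)) :
    ∑' w, u w * B v w = ∑' w, A u w * v w := by
  simp only [h.apply_eq_conj_adjoint, mul_comm (u _)]
  rw [(hasSum_conj_mul _ u).tsum_eq, adjoint_inner_left,
    ← (hasSum_mul v (A u)).tsum_eq]
  simp only [mul_comm]

theorem IsTranspose.one_add (h : IsTranspose A B) : IsTranspose (1 + A) (1 + B) := by
  intro x y
  rw [entry_add, entry_add, entry_one, entry_one, basisVec_apply_comm, h]

theorem IsTranspose.inverse (h : IsTranspose A B) (hA : IsUnit A) (hB : IsUnit B) :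
    IsTranspose (Ring.inverse A) (Ring.inverse B) := by
  intro x y
  have hAA : A (Ring.inverse A (basisVec x)) = basisVec x := by
    rw [← mul_apply_eq_comp, Ring.mul_inverse_cancel _ hA]; rfl
  have hBB : B (Ring.inverse B (basisVec y)) = basisVec y := by
    rw [← mul_apply_eq_comp, Ring.mul_inverse_cancel _ hB]; rfl
  calc entry (Ring.inverse B) x y
      = ∑' w, A (Ring.inverse A (basisVec x)) w * Ring.inverse B (basisVec y) w := by
        rw [hAA, tsum_basisVec_mul, entry_eq_apply]
    _ = ∑' w, Ring.inverse A (basisVec x) w * B (Ring.inverse B (basisVec y)) w :=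
        (h.tsum_mul_apply _ _).symm
    _ = entry (Ring.inverse A) y x := by
        rw [hBB, tsum_mul_basisVec, entry_eq_apply]

end Transpose

section MultiplicationOperator

theorem norm_mul_apply_le (φ : ℓ^∞(X, ℂ)) (v : ℓ²(X, ℂ)) (x : X) :
    ‖φ x * v x‖ ≤ ‖φ‖ * ‖v x‖ := by
  rw [norm_mul]
  gcongr
  exact lp.norm_apply_le_norm ENNReal.top_ne_zero φ x

def mulOp (φ : ℓ^∞(X, ℂ)) : ℓ²(X, ℂ) →L[ℂ] ℓ²(X, ℂ) :=
  LinearMap.mkContinuous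
    { toFun := fun v => ⟨fun x => φ x * v x,
        ((lp.memℓp v).norm.const_mul ‖φ‖).mono (norm_mul_apply_le φ v)⟩
      map_add' := fun u v => lp.ext <| funext fun x => mul_add (φ x) (u x) (v x)
      map_smul' := fun c v => lp.ext <| funext fun x => mul_left_comm (φ x) c (v x) }
    ‖φ‖ fun v => by
      calc _ ≤ ‖(‖φ‖ : ℂ) • v‖ := lp.norm_mono two_ne_zero fun x => by
              rw [lp.coeFn_smul, Pi.smul_apply, norm_smul, Complex.norm_real, norm_norm]
              exact norm_mul_apply_le φ v x
        _ = ‖φ‖ * ‖v‖ := by rw [norm_smul, Complex.norm_real, norm_norm]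

theorem mulOp_apply (φ : ℓ^∞(X, ℂ)) (v : ℓ²(X, ℂ)) (x : X) :
    mulOp φ v x = φ x * v x := rfl

theorem mulOp_basisVec (φ : ℓ^∞(X, ℂ)) (y : X) :
    mulOp φ (basisVec y) = φ y • basisVec y := by
  ext x
  rw [mulOp_apply, lp.coeFn_smul, Pi.smul_apply, smul_eq_mul]
  rcases eq_or_ne x y with rfl | h
  · rfl
  · rw [basisVec_apply_of_ne h, mul_zero, mul_zero]

theorem entry_mulOp_mul (φ : ℓ^∞(X, ℂ)) (A : ℓ²(X, ℂ) →L[ℂ] ℓ²(X, ℂ)) (x y : X) :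
    entry (mulOp φ * A) x y = φ x * entry A x y := by
  rw [entry_eq_apply, entry_eq_apply]
  rfl

theorem entry_mul_mulOp (φ : ℓ^∞(X, ℂ)) (A : ℓ²(X, ℂ) →L[ℂ] ℓ²(X, ℂ)) (x y : X) :
    entry (A * mulOp φ) x y = entry A x y * φ y := by
  rw [entry_eq_apply, entry_eq_apply, mul_apply_eq_comp, mulOp_basisVec, map_smul,
    lp.coeFn_smul, Pi.smul_apply, smul_eq_mul, mul_comm]

theorem entry_mulOp_commutator (φ : ℓ^∞(X, ℂ)) (A : ℓ²(X, ℂ) →L[ℂ] ℓ²(X, ℂ))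
    (x y : X) :
    entry (mulOp φ * A - A * mulOp φ) x y = (φ x - φ y) * entry A x y := by
  rw [entry_sub, entry_mulOp_mul, entry_mul_mulOp, sub_mul, mul_comm (entry A x y)]

end MultiplicationOperator

theorem resolvent_mul_commutator_mul {R : Type*} [Ring R] {L M : R} (D : R)
    (hML : M * (1 + L) = 1) (hLM : (1 + L) * M = 1) :
    M * (D * L - L * D) * M = M * D - D * M := by
  have hML' : M * L = 1 - M := by rw [← hML]; noncomm_ring
  have hLM' : L * M = 1 - M := by rw [← hLM]; noncomm_ring
  calc M * (D * L - L * D) * M = M * D * (L * M) - (M * L) * D * M := by noncomm_ring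
    _ = M * D - D * M := by rw [hML', hLM']; noncomm_ring

section Cutoff

def cutoff (n : ℕ) (a : ℂ) : ℂ :=
  ⟨Set.projIcc (-(n : ℝ)) n (neg_le_self n.cast_nonneg) a.re,
    Set.projIcc (-(n : ℝ)) n (neg_le_self n.cast_nonneg) a.im⟩

theorem abs_projIcc_sub_projIcc_le {a b : ℝ} (h : a ≤ b) (s t : ℝ) :
    |(Set.projIcc a b h s : ℝ) - Set.projIcc a b h t| ≤ |s - t| := by
  simpa only [Real.dist_eq, Subtype.dist_eq, NNReal.coe_one, one_mul] using
    (LipschitzWith.projIcc h).dist_le_mul s t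

theorem cutoff_re (n : ℕ) (a : ℂ) :
    (cutoff n a).re = Set.projIcc (-(n : ℝ)) n (neg_le_self n.cast_nonneg) a.re := rfl

theorem cutoff_im (n : ℕ) (a : ℂ) :
    (cutoff n a).im = Set.projIcc (-(n : ℝ)) n (neg_le_self n.cast_nonneg) a.im := rfl

theorem cutoff_of_norm_le {n : ℕ} {a : ℂ} (h : ‖a‖ ≤ n) : cutoff n a = a := by
  have hre := abs_le.mp ((Complex.abs_re_le_norm a).trans h)
  have him := abs_le.mp ((Complex.abs_im_le_norm a).trans h)
  apply Complex.ext
  · rw [cutoff_re, Set.projIcc_of_mem _ hre]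
  · rw [cutoff_im, Set.projIcc_of_mem _ him]

theorem eventually_cutoff_eq (a : ℂ) : ∀ᶠ n in atTop, cutoff n a = a := by
  filter_upwards [eventually_ge_atTop ⌈‖a‖⌉₊] with n hn
  exact cutoff_of_norm_le (Nat.ceil_le.mp hn)

theorem norm_cutoff_le (n : ℕ) (a : ℂ) : ‖cutoff n a‖ ≤ 2 * n := by
  refine (Complex.norm_le_abs_re_add_abs_im _).trans ?_
  rw [cutoff_re, cutoff_im, two_mul]
  exact add_le_add (abs_le.mpr (Set.projIcc _ _ _ _).2) (abs_le.mpr (Set.projIcc _ _ _ _).2)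

theorem norm_cutoff_sub_cutoff_le (n : ℕ) (a b : ℂ) :
    ‖cutoff n a - cutoff n b‖ ≤ 2 * ‖a - b‖ := by
  refine (Complex.norm_le_abs_re_add_abs_im _).trans ?_
  rw [Complex.sub_re, Complex.sub_im, cutoff_re, cutoff_re, cutoff_im, cutoff_im, two_mul]
  refine add_le_add ((abs_projIcc_sub_projIcc_le _ _ _).trans ?_)
    ((abs_projIcc_sub_projIcc_le _ _ _).trans ?_)
  · exact (Complex.sub_re a b ▸ Complex.abs_re_le_norm (a - b))
  · exact (Complex.sub_im a b ▸ Complex.abs_im_le_norm (a - b))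

def cutoffMul (coord : X → ℂ) (n : ℕ) : ℓ^∞(X, ℂ) :=
  ⟨fun x => cutoff n (coord x),
    memℓp_infty ⟨2 * n, by rintro _ ⟨x, rfl⟩; exact norm_cutoff_le n (coord x)⟩⟩

theorem cutoffMul_apply (coord : X → ℂ) (n : ℕ) (x : X) :
    cutoffMul coord n x = cutoff n (coord x) := rfl

end Cutoff

section FiniteRankKernel

variable {N : ℕ} (f g : Fin N → ℓ²(X, ℂ))

theorem tsum_mul_tsum_finiteRank (u v : ℓ²(X, ℂ)) :
    ∑' z, u z * ∑' w, (∑ j, f j z * g j w) * v w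
      = ∑ j, (∑' z, u z * f j z) * ∑' w, v w * g j w := by
  have hinner (z : X) :
      HasSum (fun w => (∑ j, f j z * g j w) * v w) (∑ j, f j z * ⟪star v, g j⟫_ℂ) := by
    refine (hasSum_sum fun j _ =>
      (hasSum_mul v (g j)).mul_left (f j z)).congr_fun fun w => ?_
    rw [Finset.sum_mul]
    exact Finset.sum_congr rfl fun j _ => by ring
  have houter : HasSum (fun z => u z * ∑ j, f j z * ⟪star v, g j⟫_ℂ)
      (∑ j, ⟪star u, f j⟫_ℂ * ⟪star v, g j⟫_ℂ) := by
    refine (hasSum_sum fun j _ =>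
      (hasSum_mul u (f j)).mul_right ⟪star v, g j⟫_ℂ).congr_fun fun z => ?_
    rw [Finset.mul_sum]
    exact Finset.sum_congr rfl fun j _ => by ring
  simp only [(hinner _).tsum_eq, houter.tsum_eq, (hasSum_mul _ _).tsum_eq]

theorem tendsto_tsum_mul_tsum_of_finiteRank (u v : ℓ²(X, ℂ)) (K : ℕ → X → X → ℂ)
    {C : ℝ} (hC : 0 ≤ C)
    (hlim : ∀ z w, Tendsto (fun n => K n z w) atTop (𝓝 (∑ j, f j z * g j w)))
    (hbound : ∀ n z w, ‖K n z w‖ ≤ C * ‖∑ j, f j z * g j w‖) :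
    Tendsto (fun n => ∑' z, u z * ∑' w, K n z w * v w) atTop
      (𝓝 (∑ j, (∑' z, u z * f j z) * ∑' w, v w * g j w)) := by
  set a : Fin N → ℝ := fun j => ∑' w, ‖g j w‖ * ‖v w‖
  have hdom (n : ℕ) (z w : X) :
      ‖K n z w * v w‖ ≤ C * ∑ j, ‖f j z‖ * (‖g j w‖ * ‖v w‖) := by
    calc ‖K n z w * v w‖ ≤ C * ‖∑ j, f j z * g j w‖ * ‖v w‖ := by
          rw [norm_mul]; gcongr; exact hbound n z w
      _ ≤ C * (∑ j, ‖f j z‖ * ‖g j w‖) * ‖v w‖ := by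
          gcongr
          exact (norm_sum_le _ _).trans_eq (Finset.sum_congr rfl fun j _ => norm_mul _ _)
      _ = C * ∑ j, ‖f j z‖ * (‖g j w‖ * ‖v w‖) := by
          rw [mul_assoc, Finset.sum_mul]
          simp only [mul_assoc]
  have hdom_summable (z : X) : Summable fun w => C * ∑ j, ‖f j z‖ * (‖g j w‖ * ‖v w‖) :=
    (summable_sum fun j _ => (summable_norm_mul (g j) v).mul_left _).mul_left C
  have hdom_tsum (z : X) :
      ∑' w, C * ∑ j, ‖f j z‖ * (‖g j w‖ * ‖v w‖) = C * ∑ j, ‖f j z‖ * a j := by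
    rw [tsum_mul_left, Summable.tsum_finsetSum fun j _ =>
      (summable_norm_mul (g j) v).mul_left _]
    simp only [tsum_mul_left, a]
  have hinner (z : X) : Tendsto (fun n => ∑' w, K n z w * v w) atTop
      (𝓝 (∑' w, (∑ j, f j z * g j w) * v w)) :=
    tendsto_tsum_of_dominated_convergence (hdom_summable z)
      (fun w => (hlim z w).mul_const (v w)) (Eventually.of_forall fun n w => hdom n z w)
  have hinner_le (n : ℕ) (z : X) : ‖∑' w, K n z w * v w‖ ≤ C * ∑ j, ‖f j z‖ * a j := by
    have hnorm : Summable fun w => ‖K n z w * v w‖ :=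
      (hdom_summable z).of_nonneg_of_le (fun _ => norm_nonneg _) (hdom n z)
    exact (norm_tsum_le_tsum_norm hnorm).trans
      ((hnorm.tsum_le_tsum (hdom n z) (hdom_summable z)).trans_eq (hdom_tsum z))
  have houter_summable : Summable fun z => ‖u z‖ * (C * ∑ j, ‖f j z‖ * a j) := by
    refine (summable_sum (s := Finset.univ) fun j _ =>
      ((summable_norm_mul u (f j)).mul_right (a j)).mul_left C).congr fun z => ?_
    simp only [Finset.mul_sum]
    exact Finset.sum_congr rfl fun j _ => by ring
  rw [← tsum_mul_tsum_finiteRank]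
  refine tendsto_tsum_of_dominated_convergence houter_summable
    (fun z => (hinner z).const_mul (u z)) (Eventually.of_forall fun n z => ?_)
  rw [norm_mul]
  gcongr
  exact hinner_le n z

end FiniteRankKernel

theorem sub_mul_entry_of_commutator_eq_finiteRank {coord : X → ℂ} {N : ℕ}
    {f g : Fin N → ℓ²(X, ℂ)} {L M : ℓ²(X, ℂ) →L[ℂ] ℓ²(X, ℂ)}
    (hker : ∀ z w, (coord z - coord w) * entry L z w = ∑ j, f j z * g j w)
    (hML : M * (1 + L) = 1) (hLM : (1 + L) * M = 1) (x y : X) :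
    (coord y - coord x) * entry M x y = ∑ j, M (f j) x * ∑' w, entry M w y * g j w := by
  set u : ℓ²(X, ℂ) := star ((M†) (basisVec x))
  have hu (z : X) : entry M x z = u z := entry_eq_conj_adjoint_apply M x z
  set v : ℓ²(X, ℂ) := M (basisVec y)
  have hv (w : X) : entry M w y = v w := entry_eq_apply M w y
  set K : ℕ → X → X → ℂ :=
    fun n z w => (cutoff n (coord z) - cutoff n (coord w)) * entry L z w
  have hcutoff (n : ℕ) : (cutoff n (coord y) - cutoff n (coord x)) * entry M x y
      = ∑' z, u z * ∑' w, K n z w * v w := by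
    have h := congrArg (fun A => entry A x y)
      (resolvent_mul_commutator_mul (mulOp (cutoffMul coord n)) hML hLM)
    rw [entry_mul_mul, entry_sub, entry_mul_mulOp, entry_mulOp_mul] at h
    simp only [entry_mulOp_commutator, cutoffMul_apply, hu, hv] at h
    rw [hu]
    convert h.symm using 1
    ring
  have hK_lim (z w : X) : Tendsto (fun n => K n z w) atTop (𝓝 (∑ j, f j z * g j w)) := by
    rw [← hker]
    refine tendsto_const_nhds.congr' ?_
    filter_upwards [eventually_cutoff_eq (coord z), eventually_cutoff_eq (coord w)]
      with n hz hw
    simp only [K, hz, hw]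
  have hK_bound (n : ℕ) (z w : X) : ‖K n z w‖ ≤ 2 * ‖∑ j, f j z * g j w‖ := by
    rw [← hker, norm_mul, norm_mul, ← mul_assoc]
    gcongr
    exact norm_cutoff_sub_cutoff_le n _ _
  have hlim_left : Tendsto (fun n => (cutoff n (coord y) - cutoff n (coord x)) * entry M x y)
      atTop (𝓝 ((coord y - coord x) * entry M x y)) := by
    refine tendsto_const_nhds.congr' ?_
    filter_upwards [eventually_cutoff_eq (coord x), eventually_cutoff_eq (coord y)]
      with n hx hy
    rw [hx, hy]
  have hlim_right :=
    tendsto_tsum_mul_tsum_of_finiteRank f g u v K zero_le_two hK_lim hK_bound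
  rw [tendsto_nhds_unique (hlim_left.congr hcutoff) hlim_right]
  simp only [← hu, ← hv, (hasSum_entry_mul M _ x).tsum_eq]

end IntegrableOperator

open IntegrableOperator in
theorem statement3 (𝔛 : Set ℂ) (N : ℕ) (f g : Fin N → lp (fun _ : 𝔛 => ℂ) 2)
    (horth : ∀ x : 𝔛, ∑ j, f j x * g j x = 0)
    (L Lt : lp (fun _ : 𝔛 => ℂ) 2 →L[ℂ] lp (fun _ : 𝔛 => ℂ) 2)
    (hL : ∀ x y : 𝔛, x ≠ y → entry L x y = (∑ j, f j x * g j y) / ((x : ℂ) - (y : ℂ)))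
    (hLt : ∀ x y : 𝔛, entry Lt x y = entry L y x)
    (hinv : IsUnit (1 + L)) (hinvt : IsUnit (1 + Lt)) :
    ∀ x y : 𝔛, x ≠ y →
      entry (L * Ring.inverse (1 + L)) x y =
        (∑ j, (Ring.inverse (1 + L) (f j)) x * (Ring.inverse (1 + Lt) (g j)) y) /
          ((x : ℂ) - (y : ℂ)) := by
  intro x y hxy
  set M := Ring.inverse (1 + L)
  have hML : M * (1 + L) = 1 := Ring.inverse_mul_cancel _ hinv
  have hLM : (1 + L) * M = 1 := Ring.mul_inverse_cancel _ hinv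
  have hker (z w : 𝔛) : ((z : ℂ) - w) * entry L z w = ∑ j, f j z * g j w := by
    rcases eq_or_ne z w with rfl | h
    · rw [sub_self, zero_mul, horth]
    · rw [hL z w h, mul_div_cancel₀ _ (sub_ne_zero.mpr (Subtype.coe_injective.ne h))]
  have hMt : IsTranspose M (Ring.inverse (1 + Lt)) :=
    (IsTranspose.one_add hLt).inverse hinv hinvt
  have hLM' : L * M = 1 - M := eq_sub_of_add_eq' (by rw [← hLM, add_mul, one_mul])
  rw [hLM', entry_sub, entry_one_of_ne hxy, zero_sub,
    eq_div_iff (sub_ne_zero.mpr (Subtype.coe_injective.ne hxy))]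
  simp only [hMt.apply_eq_tsum]
  rw [← sub_mul_entry_of_commutator_eq_finiteRank hker hML hLM x y]
  ring
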